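/- Let g be the two-dimensional real Lie algebra with basis e₁, e₂ and bracket ⁅e₁,e₂⁆ = e₂ (the Lie algebra of Aff(ℝ)). Then there exist no inner product ⟨·,·⟩ on g and bilinear product · on g satisfying, for all x,y,z ∈ g: x·y − y·x = ⁅x,y⁆, ⟨x·y, z⟩ + ⟨y, x·z⟩ = 0, and L_⁅x,y⁆ = L_x ∘ L_y − L_y ∘ L_x, where L_x(y) = x·y. (Equivalently: Aff(ℝ) admits no left-invariant flat Riemannian metric.) -/

import Mathlib

/-!
The left multiplications `L x = P x` of a flat Levi-Civita product form a Lie algebra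
representation of `g` by `B`-skew-adjoint endomorphisms. In dimension two the skew-adjoint
endomorphisms of a nondegenerate symmetric form are the multiples of a single one, so they
commute; hence `L` kills `⁅b 0, b 1⁆ = b 1`. Torsion-freeness then gives `L (b 0) (b 1) = b 1`,
contradicting `B (L (b 0) (b 1)) (b 1) = 0` for the skew-adjoint `L (b 0)`.
-/

namespace LinearMap.BilinForm

variable {K V : Type*} [Field K] [NeZero (2 : K)] [AddCommGroup V] [Module K V]
  {B : LinearMap.BilinForm K V} {S T : Module.End K V}

theorem IsSymm.apply_self_eq_zero_of_isSkewAdjoint (hB : B.IsSymm)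
    (hS : B.IsSkewAdjoint S) (x : V) : B (S x) x = 0 := by
  have h : 2 * B (S x) x = 0 := by
    rw [two_mul]; nth_rw 2 [hB.eq]; rw [hS x x]; simp
  exact (mul_eq_zero.mp h).resolve_left two_ne_zero

theorem IsSymm.eq_zero_of_isSkewAdjoint (hB : B.IsSymm) (hsep : B.SeparatingLeft)
    (b : Module.Basis (Fin 2) K V) (hS : B.IsSkewAdjoint S) (h01 : B (S (b 0)) (b 1) = 0) :
    S = 0 := by
  have h10 : B (S (b 1)) (b 0) = 0 := by
    rw [hS, Pi.neg_apply, map_neg, hB.eq, h01, neg_zero]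
  refine b.ext fun i ↦ hsep _ fun y ↦ ?_
  suffices B (S (b i)) = 0 by simp [this]
  refine b.ext fun j ↦ ?_
  fin_cases i <;> fin_cases j <;>
    simp [h01, h10, hB.apply_self_eq_zero_of_isSkewAdjoint hS]

theorem IsSymm.commute_of_isSkewAdjoint (hB : B.IsSymm) (hsep : B.SeparatingLeft)
    (hV : Module.finrank K V = 2) (hS : B.IsSkewAdjoint S) (hT : B.IsSkewAdjoint T) :
    Commute S T := by
  have : Module.Finite K V := Module.finite_of_finrank_eq_succ hV
  let b := Module.finBasisOfFinrankEq K V hV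
  set s := B (S (b 0)) (b 1)
  set t := B (T (b 0)) (b 1)
  have hST : B.IsSkewAdjoint (t • S - s • T : Module.End K V) := by
    rw [← mem_skewAdjointSubmodule] at hS hT ⊢
    exact sub_mem (Submodule.smul_mem _ t hS) (Submodule.smul_mem _ s hT)
  have hts : t • S = s • T := sub_eq_zero.mp <|
    hB.eq_zero_of_isSkewAdjoint hsep b hST (by simp [s, t, mul_comm])
  by_cases ht : t = 0
  · rw [hB.eq_zero_of_isSkewAdjoint hsep b hT ht]
    exact Commute.zero_right S
  · rw [← inv_smul_smul₀ ht S, hts, smul_smul]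
    exact (Commute.refl T).smul_left _

end LinearMap.BilinForm

theorem aff_line_no_flat_riemannian
    (g : Type*) [LieRing g] [LieAlgebra ℝ g]
    (b : Module.Basis (Fin 2) ℝ g) (hbr : ⁅b 0, b 1⁆ = b 1) :
    ¬ ∃ (B : LinearMap.BilinForm ℝ g) (P : g →ₗ[ℝ] g →ₗ[ℝ] g),
        (∀ x y : g, B x y = B y x) ∧
        (∀ x : g, x ≠ 0 → 0 < B x x) ∧
        (∀ x y : g, P x y - P y x = ⁅x, y⁆) ∧
        (∀ x y z : g, B (P x y) z + B y (P x z) = 0) ∧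
        (∀ x y : g, P ⁅x, y⁆ = P x ∘ₗ P y - P y ∘ₗ P x) := by
  rintro ⟨B, P, hsymm, hpos, htor, hskew, hflat⟩
  have hB : B.IsSymm := ⟨hsymm⟩
  have hsep : B.SeparatingLeft := fun x hx ↦ by
    by_contra hx0
    exact (hpos x hx0).ne' (hx x)
  have hP : ∀ x, B.IsSkewAdjoint (P x) := fun x y z ↦ by
    simpa [eq_neg_iff_add_eq_zero] using hskew x y z
  have hPf : P (b 1) = 0 := by
    have hcomm := hB.commute_of_isSkewAdjoint hsep (by simp [Module.finrank_eq_card_basis b])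
      (hP (b 0)) (hP (b 1))
    rw [← hbr, hflat, ← Module.End.mul_eq_comp, ← Module.End.mul_eq_comp, hcomm.eq, sub_self]
  have hPef : P (b 0) (b 1) = b 1 := by simpa [hbr, hPf] using htor (b 0) (b 1)
  have hff := hB.apply_self_eq_zero_of_isSkewAdjoint (hP (b 0)) (b 1)
  rw [hPef] at hff
  exact (hpos _ (b.ne_zero 1)).ne' hff
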